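/- arXiv:2601.10843 — 3 statements merged into one kernel-verified Lean document; each statement's English description precedes it below -/
import Mathlib

section
/- Optimality equivalence: for any f : ℝⁿ × ℝᵐ → ℝ̄ with Lagrangian l(x,y) = −(f(x,·))*(y), and any (v̄,ū,x̄,ȳ), the three conditions (i) x̄ minimizes x ↦ f(x,ū) − ⟨v̄,x⟩ with finite value, (ii) ȳ minimizes y ↦ f*(v̄,y) − ⟨ū,y⟩ with finite value, (iii) p_v̄(ū) = −q_ū(v̄), hold jointly if and only if f(x̄,ū) − ⟨v̄,x̄⟩ = l(x̄,ȳ) + ⟨ū,ȳ⟩ − ⟨v̄,x̄⟩ = ⟨ū,ȳ⟩ − f*(v̄,ȳ), with all quantities real. -/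
open scoped BigOperators

noncomputable def dotE {n : ℕ} (v x : Fin n → ℝ) : EReal := ((∑ i, v i * x i : ℝ) : EReal)

noncomputable def conj {n : ℕ} (h : (Fin n → ℝ) → EReal) (v : Fin n → ℝ) : EReal :=
  ⨆ x, dotE v x - h x

noncomputable def conj2 {n m : ℕ} (f : (Fin n → ℝ) × (Fin m → ℝ) → EReal)
    (v : Fin n → ℝ) (y : Fin m → ℝ) : EReal :=
  ⨆ x, ⨆ u, dotE v x + dotE y u - f (x, u)

def epi {α : Type*} (h : α → EReal) : Set (α × ℝ) := {p | h p.1 ≤ (p.2 : EReal)}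

def ConvexFn {α : Type*} [AddCommMonoid α] [Module ℝ α] (h : α → EReal) : Prop :=
  Convex ℝ (epi h)

def ClosedFn {α : Type*} [TopologicalSpace α] (h : α → EReal) : Prop := IsClosed (epi h)

def ProperFn {α : Type*} (h : α → EReal) : Prop := (∃ x, h x ≠ ⊤) ∧ ∀ x, h x ≠ ⊥

/-- The Lagrangian `l(x,y) = −(f(x,·))*(y)`. -/
noncomputable def lagr {n m : ℕ} (f : (Fin n → ℝ) × (Fin m → ℝ) → EReal)
    (x : Fin n → ℝ) (y : Fin m → ℝ) : EReal :=
  -(conj (fun u : Fin m → ℝ => f (x, u)) y)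

/- Auxiliary lemmas -/

lemma neg_sub_real (a : EReal) (c : ℝ) : -(a - (c:EReal)) = (c:EReal) - a := by
  induction a using EReal.rec with
  | bot => simp
  | coe x => rw [← EReal.coe_sub, ← EReal.coe_sub, ← EReal.coe_neg]; norm_num
  | top => simp

lemma neg_real_sub (a : EReal) (c : ℝ) : -((c:EReal) - a) = a - (c:EReal) := by
  induction a using EReal.rec with
  | bot => simp
  | coe x => rw [← EReal.coe_sub, ← EReal.coe_sub, ← EReal.coe_neg]; norm_num
  | top => simp

lemma ereal_cases (a : EReal) : a = ⊥ ∨ a = ⊤ ∨ ∃ t : ℝ, a = (t : EReal) := by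
  induction a using EReal.rec with
  | bot => exact Or.inl rfl
  | coe x => exact Or.inr (Or.inr ⟨x, rfl⟩)
  | top => exact Or.inr (Or.inl rfl)

lemma dotE_comm {n : ℕ} (v x : Fin n → ℝ) : dotE v x = dotE x v := by
  simp [dotE, mul_comm]

/-- Weak duality, pointwise. -/
lemma weak_dual {n m : ℕ} (f : (Fin n → ℝ) × (Fin m → ℝ) → EReal)
    (vb : Fin n → ℝ) (ub : Fin m → ℝ) (x : Fin n → ℝ) (y : Fin m → ℝ) :
    dotE ub y - conj2 f vb y ≤ f (x, ub) - dotE vb x := by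
  have h : dotE vb x + dotE y ub - f (x, ub) ≤ conj2 f vb y :=
    le_iSup_of_le x (le_iSup_of_le ub le_rfl)
  rcases ereal_cases (f (x, ub)) with hf | hf | ⟨t, hf⟩
  · rw [hf] at h
    have hc : conj2 f vb y = ⊤ := by
      refine top_le_iff.mp ?_
      refine le_trans (le_of_eq ?_) h
      rw [sub_eq_add_neg, EReal.neg_bot, dotE, dotE, ← EReal.coe_add]
      simp
    rw [hc]
    simp [dotE]
  · rw [hf]
    simp [dotE]
  · rw [hf] at h ⊢
    rcases ereal_cases (conj2 f vb y) with hc | hc | ⟨c, hc⟩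
    · exfalso
      rw [hc, dotE, dotE, ← EReal.coe_add, ← EReal.coe_sub] at h
      exact (EReal.coe_ne_bot _) (le_bot_iff.mp h)
    · rw [hc]; simp [dotE]
    · rw [hc, dotE, dotE, ← EReal.coe_add, ← EReal.coe_sub] at h
      rw [hc, dotE, dotE, ← EReal.coe_sub, ← EReal.coe_sub, EReal.coe_le_coe_iff]
      rw [EReal.coe_le_coe_iff] at h
      have : (∑ i, ub i * y i) = ∑ i, y i * ub i := by
        exact Finset.sum_congr rfl fun i _ => mul_comm _ _
      rw [this]; linarith

/-- Chain (a): the Lagrangian middle term is at most the primal value. -/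
lemma chain_a {n m : ℕ} (f : (Fin n → ℝ) × (Fin m → ℝ) → EReal)
    (vb xb : Fin n → ℝ) (ub yb : Fin m → ℝ) :
    lagr f xb yb + dotE ub yb - dotE vb xb ≤ f (xb, ub) - dotE vb xb := by
  set g : EReal := conj (fun u : Fin m → ℝ => f (xb, u)) yb with hg
  have hge : dotE yb ub - f (xb, ub) ≤ g := le_iSup_of_le ub le_rfl
  rcases ereal_cases (f (xb, ub)) with hf | hf | ⟨t, hf⟩
  · rw [hf] at hge
    have hgt : g = ⊤ := by
      refine top_le_iff.mp (le_trans (le_of_eq ?_) hge)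
      rw [sub_eq_add_neg, EReal.neg_bot, dotE]
      simp
    rw [lagr, ← hg, hgt]
    simp [dotE]
  · rw [hf]; simp [dotE]
  · rw [hf] at hge ⊢
    rcases ereal_cases g with hc | hc | ⟨c, hc⟩
    · exfalso
      rw [hc, dotE, ← EReal.coe_sub] at hge
      exact (EReal.coe_ne_bot _) (le_bot_iff.mp hge)
    · rw [lagr, ← hg, hc]
      simp [dotE]
    · rw [hc, dotE, ← EReal.coe_sub, EReal.coe_le_coe_iff] at hge
      rw [lagr, ← hg, hc, dotE, dotE, ← EReal.coe_neg, ← EReal.coe_add,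
        ← EReal.coe_sub, ← EReal.coe_sub, EReal.coe_le_coe_iff]
      have : (∑ i, yb i * ub i) = ∑ i, ub i * yb i := by
        exact Finset.sum_congr rfl fun i _ => mul_comm _ _
      rw [this] at hge; linarith

/-- Chain (b): the dual value is at most the Lagrangian middle term. -/
lemma chain_b {n m : ℕ} (f : (Fin n → ℝ) × (Fin m → ℝ) → EReal)
    (vb xb : Fin n → ℝ) (ub yb : Fin m → ℝ) :
    dotE ub yb - conj2 f vb yb ≤ lagr f xb yb + dotE ub yb - dotE vb xb := by
  set g : EReal := conj (fun u : Fin m → ℝ => f (xb, u)) yb with hg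
  have key : dotE vb xb + g ≤ conj2 f vb yb := by
    have h1 : g ≤ conj2 f vb yb - dotE vb xb := by
      refine iSup_le fun u => ?_
      show dotE yb u - f (xb, u) ≤ conj2 f vb yb - dotE vb xb
      have hb : dotE vb xb ≠ ⊥ := by simp [dotE]
      have ht : dotE vb xb ≠ ⊤ := by simp [dotE]
      rw [EReal.le_sub_iff_add_le (Or.inl hb) (Or.inl ht)]
      have : dotE yb u - f (xb, u) + dotE vb xb
          = dotE vb xb + dotE yb u - f (xb, u) := by
        rw [sub_eq_add_neg, sub_eq_add_neg, add_right_comm, add_comm (dotE yb u)]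
      rw [this]
      exact le_iSup_of_le xb (le_iSup_of_le u le_rfl)
    have := EReal.add_le_of_le_sub h1
    rwa [add_comm] at this
  rcases ereal_cases g with hgc | hgc | ⟨c, hgc⟩
  · rw [lagr, ← hg, hgc]
    simp [dotE]
  · rw [hgc] at key
    have hc : conj2 f vb yb = ⊤ := by
      refine top_le_iff.mp (le_trans (le_of_eq ?_) key)
      rw [dotE]; simp
    rw [hc]
    simp [dotE]
  · rw [hgc, dotE, ← EReal.coe_add] at key
    rcases ereal_cases (conj2 f vb yb) with hcc | hcc | ⟨e, hcc⟩
    · exfalso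
      rw [hcc] at key
      exact (EReal.coe_ne_bot _) (le_bot_iff.mp key)
    · rw [hcc]; simp [dotE]
    · rw [hcc, EReal.coe_le_coe_iff] at key
      rw [hcc, lagr, ← hg, hgc, dotE, dotE, ← EReal.coe_neg, ← EReal.coe_add,
        ← EReal.coe_sub, ← EReal.coe_sub, EReal.coe_le_coe_iff]
      linarith

/-- the optimality conditions (i) x̄ primal optimal with finite value,
(ii) ȳ dual optimal with finite value, (iii) zero duality gap, hold jointly iff
`f(x̄,ū) − ⟨v̄,x̄⟩ = l(x̄,ȳ) + ⟨ū,ȳ⟩ − ⟨v̄,x̄⟩ = ⟨ū,ȳ⟩ − f*(v̄,ȳ)`, all real. -/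
theorem stmt4 {n m : ℕ} (f : (Fin n → ℝ) × (Fin m → ℝ) → EReal)
    (vb xb : Fin n → ℝ) (ub yb : Fin m → ℝ) :
    ((f (xb, ub) - dotE vb xb ≠ ⊤ ∧ f (xb, ub) - dotE vb xb ≠ ⊥ ∧
        f (xb, ub) - dotE vb xb = ⨅ x : Fin n → ℝ, f (x, ub) - dotE vb x) ∧
     (conj2 f vb yb - dotE ub yb ≠ ⊤ ∧ conj2 f vb yb - dotE ub yb ≠ ⊥ ∧
        conj2 f vb yb - dotE ub yb = ⨅ y : Fin m → ℝ, conj2 f vb y - dotE ub y) ∧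
     (⨅ x : Fin n → ℝ, f (x, ub) - dotE vb x)
        = -(⨅ y : Fin m → ℝ, conj2 f vb y - dotE ub y))
    ↔
    (f (xb, ub) - dotE vb xb = lagr f xb yb + dotE ub yb - dotE vb xb ∧
     lagr f xb yb + dotE ub yb - dotE vb xb = dotE ub yb - conj2 f vb yb ∧
     f (xb, ub) - dotE vb xb ≠ ⊤ ∧ f (xb, ub) - dotE vb xb ≠ ⊥) := by
  set A := f (xb, ub) - dotE vb xb with hA
  set B := conj2 f vb yb - dotE ub yb with hB
  set M := lagr f xb yb + dotE ub yb - dotE vb xb with hM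
  set T3 := dotE ub yb - conj2 f vb yb with hT3
  set p := ⨅ x : Fin n → ℝ, f (x, ub) - dotE vb x with hp
  set q := ⨅ y : Fin m → ℝ, conj2 f vb y - dotE ub y with hq
  have hnegB : -B = T3 := by rw [hB, hT3, dotE, neg_sub_real]
  have hnegT3 : -T3 = B := by rw [← hnegB, neg_neg]
  constructor
  · rintro ⟨⟨hAt, hAb, hAp⟩, ⟨hBt, hBb, hBq⟩, hpq⟩
    have hAT3 : A = T3 := by
      rw [hAp, hpq, ← hBq, hnegB]
    have hMA : M = A := le_antisymm (chain_a f vb xb ub yb)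
      (by rw [hAT3]; exact chain_b f vb xb ub yb)
    exact ⟨hMA.symm, hMA.trans hAT3, hAt, hAb⟩
  · rintro ⟨h1, h2, hAt, hAb⟩
    have hAT3 : A = T3 := h1.trans h2
    have hpA : p = A := by
      refine le_antisymm (iInf_le _ xb) (le_iInf fun x => ?_)
      rw [hAT3]
      exact weak_dual f vb ub x yb
    have hqB : q = B := by
      refine le_antisymm (iInf_le _ yb) (le_iInf fun y => ?_)
      rw [← EReal.neg_le_neg_iff, hnegB, ← hAT3]
      have : -(conj2 f vb y - dotE ub y) = dotE ub y - conj2 f vb y := by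
        rw [dotE, neg_sub_real]
      rw [this]
      exact weak_dual f vb ub xb y
    have hBA : B = -A := by rw [hAT3, ← hnegT3]
    refine ⟨⟨hAt, hAb, hpA.symm⟩, ⟨?_, ?_, hqB.symm⟩, ?_⟩
    · rw [hBA]; simp [hAb]
    · rw [hBA]; simp [hAt]
    · rw [hpA, hqB, hBA, neg_neg]
end

section
/- Optimality conditions for composite conjugates: with f₀, F, g and ρ as above, for any (v̄, x̄, ȳ) ∈ ℝⁿ × ℝⁿ × ℝᵐ, the pair of conditions (a) (f₀ + g∘F)(x̄) + (f₀ + g∘F)*(v̄) = ⟨v̄,x̄⟩ and (b) (f₀ + g∘F)*(v̄) = (f₀ + ⟨ȳ,F⟩)*(v̄) + g*(ȳ) is equivalent to the pair (a') g(F(x̄)) + g*(ȳ) = ⟨ȳ,F(x̄)⟩ and (b') (f₀ + ⟨ȳ,F⟩)(x̄) + (f₀ + ⟨ȳ,F⟩)*(v̄) = ⟨v̄,x̄⟩. -/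
open scoped BigOperators

/-- Scalarization `⟨y,F⟩ : ℝⁿ → ℝ̄`, equal to `⟨y,F(x)⟩` on `dom F` and `+∞` otherwise. -/
noncomputable def scal {n m : ℕ} (y : Fin m → ℝ) (F : (Fin n → ℝ) → WithTop (Fin m → ℝ))
    (x : Fin n → ℝ) : EReal :=
  WithTop.recTopCoe ⊤ (fun w => dotE y w) (F x)

/-- The perturbation function `f(x,u) = f₀(x) + g(F(x)+u)` on `dom F`, `+∞` otherwise. -/
noncomputable def pert {n m : ℕ} (f0 : (Fin n → ℝ) → EReal)
    (F : (Fin n → ℝ) → WithTop (Fin m → ℝ)) (g : (Fin m → ℝ) → EReal)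
    (p : (Fin n → ℝ) × (Fin m → ℝ)) : EReal :=
  WithTop.recTopCoe ⊤ (fun w => f0 p.1 + g (w + p.2)) (F p.1)

/-- The composite function `(f₀ + g∘F)(x)`, equal to `f₀(x) + g(F(x))` on `dom F`
and `+∞` otherwise. -/
noncomputable def compFn {n m : ℕ} (f0 : (Fin n → ℝ) → EReal)
    (F : (Fin n → ℝ) → WithTop (Fin m → ℝ)) (g : (Fin m → ℝ) → EReal)
    (x : Fin n → ℝ) : EReal :=
  WithTop.recTopCoe ⊤ (fun w => f0 x + g w) (F x)

/-!
Write `w = F x̄`; each pair of conditions forces `x̄ ∈ dom F` and all quantities involved to be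
finite. Since `g (F x) ≥ ⟨ȳ, F x⟩ - g*(ȳ)`, one has `(f₀ + g∘F)* ≤ (f₀ + ⟨ȳ,F⟩)* + g*(ȳ)`, and
the Fenchel–Young inequalities for `g` at `(w, ȳ)` and for `f₀ + ⟨ȳ,F⟩` at `(x̄, v̄)` add up to
`⟨v̄,x̄⟩ ≤ (f₀ + g∘F)(x̄) + (f₀ + ⟨ȳ,F⟩)*(v̄) + g*(ȳ)`, which dominates the Fenchel–Young
inequality for `f₀ + g∘F`. Either pair of conditions says exactly that this chain is tight.
-/

theorem EReal.exists_eq_coe_of_add_eq_coe {a b : EReal} {r : ℝ} (h : a + b = r) :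
    ∃ p q : ℝ, a = p ∧ b = q ∧ p + q = r := by
  induction a using EReal.rec <;> induction b using EReal.rec
  case coe.coe p q => exact ⟨p, q, rfl, rfl, mod_cast h⟩
  all_goals simp_all

section Conjugate

variable {n : ℕ} (h : (Fin n → ℝ) → EReal) (v : Fin n → ℝ)

theorem dotE_sub_le_conj (x : Fin n → ℝ) : dotE v x - h x ≤ conj h v :=
  le_iSup (fun x => dotE v x - h x) x

theorem conj_le_coe_iff (c : ℝ) : conj h v ≤ c ↔ ∀ x, dotE v x ≤ c + h x := by
  refine iSup_le_iff.trans (forall_congr' fun x => EReal.sub_le_iff_le_add ?_ ?_) <;>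
    simp

end Conjugate

section Composite

variable {n m : ℕ} (f0 : (Fin n → ℝ) → EReal) {F : (Fin n → ℝ) → WithTop (Fin m → ℝ)}
  (g : (Fin m → ℝ) → EReal) {x : Fin n → ℝ}

theorem compFn_of_eq_top (hx : F x = ⊤) : compFn f0 F g x = ⊤ := by
  simp [compFn, hx]

theorem compFn_of_eq_coe {w : Fin m → ℝ} (hx : F x = w) : compFn f0 F g x = f0 x + g w := by
  simp [compFn, hx]

theorem scal_of_eq_top (y : Fin m → ℝ) (hx : F x = ⊤) : scal y F x = ⊤ := by
  simp [scal, hx]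

theorem scal_of_eq_coe (y : Fin m → ℝ) {w : Fin m → ℝ} (hx : F x = w) :
    scal y F x = dotE y w := by
  simp [scal, hx]

theorem conj_compFn_le (v : Fin n → ℝ) (y : Fin m → ℝ) {A B : ℝ}
    (hA : conj (fun x => f0 x + scal y F x) v ≤ A) (hB : conj g y ≤ B) :
    conj (compFn f0 F g) v ≤ ((A + B : ℝ) : EReal) := by
  rw [conj_le_coe_iff] at hA hB ⊢
  intro x
  cases hF : F x with
  | top => simp [compFn_of_eq_top f0 g hF]
  | coe w =>
    calc dotE v x ≤ A + (f0 x + dotE y w) := by simpa [scal_of_eq_coe y hF] using hA x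
      _ ≤ A + (f0 x + (B + g w)) := by gcongr; exact hB w
      _ = ((A + B : ℝ) : EReal) + compFn f0 F g x := by
        rw [compFn_of_eq_coe f0 g hF, EReal.coe_add]; ac_rfl

variable {f0 g} (vb xb : Fin n → ℝ) (yb : Fin m → ℝ) {w : Fin m → ℝ}

theorem decomposed_of_composite_conditions (hw : F xb = w)
    (h : (f0 xb + g w) + conj (compFn f0 F g) vb = dotE vb xb ∧
      conj (compFn f0 F g) vb = conj (fun x => f0 x + scal yb F x) vb + conj g yb) :
    g w + conj g yb = dotE yb w ∧
      (f0 xb + dotE yb w) + conj (fun x => f0 x + scal yb F x) vb = dotE vb xb := by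
  obtain ⟨ha, hb⟩ := h
  obtain ⟨a, k, hpg, hk, hak⟩ := EReal.exists_eq_coe_of_add_eq_coe ha
  obtain ⟨p, e, hp, he, hpe⟩ := EReal.exists_eq_coe_of_add_eq_coe hpg
  obtain ⟨c, d, hc, hd, hcd⟩ := EReal.exists_eq_coe_of_add_eq_coe (hk ▸ hb).symm
  -- The two Fenchel–Young inequalities add up to the equality `ha`, so both are tight.
  have fy_g := dotE_sub_le_conj g yb w
  have fy_h := dotE_sub_le_conj (fun x => f0 x + scal yb F x) vb xb
  simp only [scal_of_eq_coe yb hw, hp, he, hc, hd, dotE] at fy_g fy_h ⊢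
  norm_cast at fy_g fy_h ⊢
  constructor <;> linarith

theorem composite_of_decomposed_conditions (hw : F xb = w)
    (h : g w + conj g yb = dotE yb w ∧
      (f0 xb + dotE yb w) + conj (fun x => f0 x + scal yb F x) vb = dotE vb xb) :
    (f0 xb + g w) + conj (compFn f0 F g) vb = dotE vb xb ∧
      conj (compFn f0 F g) vb = conj (fun x => f0 x + scal yb F x) vb + conj g yb := by
  obtain ⟨ha, hb⟩ := h
  obtain ⟨e, d, he, hd, hed⟩ := EReal.exists_eq_coe_of_add_eq_coe ha
  obtain ⟨q, c, hq, hc, hqc⟩ := EReal.exists_eq_coe_of_add_eq_coe hb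
  obtain ⟨p, s, hp, hs, hps⟩ := EReal.exists_eq_coe_of_add_eq_coe hq
  have upper := conj_compFn_le f0 g vb yb hc.le hd.le
  have fy := dotE_sub_le_conj (compFn f0 F g) vb xb
  rw [compFn_of_eq_coe f0 g hw, hp, he] at fy
  have hk : conj (compFn f0 F g) vb = ((c + d : ℝ) : EReal) := by
    refine le_antisymm upper (le_trans ?_ fy)
    simp only [dotE] at hs hed hqc ⊢
    norm_cast at hs hed hqc ⊢
    linarith
  simp only [hp, he, hc, hd, hk, dotE] at hs hed hqc ⊢
  norm_cast at hs hed hqc ⊢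
  constructor <;> linarith

end Composite

/-- the pair (a) `(f₀+g∘F)(x̄) + (f₀+g∘F)*(v̄) = ⟨v̄,x̄⟩`,
(b) `(f₀+g∘F)*(v̄) = (f₀+⟨ȳ,F⟩)*(v̄) + g*(ȳ)` is equivalent to the pair
(a') `g(F(x̄)) + g*(ȳ) = ⟨ȳ,F(x̄)⟩`, (b') `(f₀+⟨ȳ,F⟩)(x̄) + (f₀+⟨ȳ,F⟩)*(v̄) = ⟨v̄,x̄⟩`
(where outside `dom F` all the composite quantities are `+∞`). -/
theorem stmt8 {n m : ℕ} (f0 : (Fin n → ℝ) → EReal)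
    (F : (Fin n → ℝ) → WithTop (Fin m → ℝ)) (g : (Fin m → ℝ) → EReal)
    (vb xb : Fin n → ℝ) (yb : Fin m → ℝ) :
    (compFn f0 F g xb + conj (compFn f0 F g) vb = dotE vb xb ∧
     conj (compFn f0 F g) vb
        = conj (fun x : Fin n → ℝ => f0 x + scal yb F x) vb + conj g yb)
    ↔
    (WithTop.recTopCoe ⊤ g (F xb) + conj g yb = scal yb F xb ∧
     (f0 xb + scal yb F xb) + conj (fun x : Fin n → ℝ => f0 x + scal yb F x) vb
        = dotE vb xb) := by
  cases hF : F xb with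
  | top =>
    rw [compFn_of_eq_top f0 g hF, scal_of_eq_top yb hF]
    refine iff_of_false (fun ⟨h, _⟩ => ?_) (fun ⟨_, h⟩ => ?_)
    · obtain ⟨_, _, h, -⟩ := EReal.exists_eq_coe_of_add_eq_coe h
      simp at h
    · obtain ⟨_, _, h, -⟩ := EReal.exists_eq_coe_of_add_eq_coe h
      obtain ⟨_, _, -, h, -⟩ := EReal.exists_eq_coe_of_add_eq_coe h
      simp at h
  | coe w =>
    rw [compFn_of_eq_coe f0 g hF, scal_of_eq_coe yb hF, WithTop.recTopCoe_coe]
    exact ⟨decomposed_of_composite_conditions vb xb yb hF,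
      composite_of_decomposed_conditions vb xb yb hF⟩
end

section
/- Horizon-cone criterion for joint convexity: let g ∈ Γ₀(ℝᵐ), F : ℝⁿ → ℝᵐ ∪ {+∞•} with dom(g) ∩ rge(F) ≠ ∅, and f(x,u) = g(F(x)+u) on dom F (+∞ otherwise). Then f is convex (jointly in (x,u)) if and only if the scalarization ⟨y,F⟩ : ℝⁿ → ℝ̄ is convex for every y ∈ (hzn g)°, where hzn(g) = {d : g(x+d) ≤ g(x) for all x ∈ dom g} is the horizon cone of g and (hzn g)° its polar. -/
open scoped BigOperators

/-- The horizon cone `hzn(g) = {d : g(x+d) ≤ g(x) for all x ∈ dom g}`. -/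
def hznCone {m : ℕ} (g : (Fin m → ℝ) → EReal) : Set (Fin m → ℝ) :=
  {d | ∀ x : Fin m → ℝ, g x ≠ ⊤ → g (x + d) ≤ g x}


theorem convexFn_jensen {α : Type*} [AddCommGroup α] [Module ℝ α] {h : α → EReal}
    (hc : ConvexFn h) {x y : α} {r s a b : ℝ} (hx : h x ≤ (r:EReal)) (hy : h y ≤ (s:EReal))
    (ha : 0 ≤ a) (hb : 0 ≤ b) (hab : a + b = 1) :
    h (a • x + b • y) ≤ ((a*r + b*s : ℝ) : EReal) := by
  have := hc (show (x,r) ∈ epi h from hx) (show (y,s) ∈ epi h from hy) ha hb hab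
  simpa [epi, Prod.smul_def, smul_eq_mul] using this

theorem convex_of_pos {E : Type*} [AddCommMonoid E] [Module ℝ E] {s : Set E}
    (h : ∀ p ∈ s, ∀ q ∈ s, ∀ a b : ℝ, 0 < a → 0 < b → a + b = 1 → a • p + b • q ∈ s) :
    Convex ℝ s := by
  intro p hp q hq a b ha hb hab
  rcases ha.eq_or_lt with ha0 | ha0
  · have hb1 : b = 1 := by linarith
    rw [← ha0, hb1]; simpa using hq
  rcases hb.eq_or_lt with hb0 | hb0
  · have ha1 : a = 1 := by linarith
    rw [← hb0, ha1]; simpa using hp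
  exact h p hp q hq a b ha0 hb0 hab

theorem hzn_zero {m : ℕ} {g : (Fin m → ℝ) → EReal} : (0 : Fin m → ℝ) ∈ hznCone g :=
  fun x _ => by simp

theorem hzn_convex {m : ℕ} {g : (Fin m → ℝ) → EReal} (hp : ProperFn g) (hc : ConvexFn g) :
    Convex ℝ (hznCone g) := by
  intro d1 hd1 d2 hd2 a b ha hb hab x hx
  set r := (g x).toReal with hr
  have hxr : g x = (r : EReal) := (EReal.coe_toReal hx (hp.2 x)).symm
  have h1 : g (x + d1) ≤ (r:EReal) := hxr ▸ hd1 x hx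
  have h2 : g (x + d2) ≤ (r:EReal) := hxr ▸ hd2 x hx
  have key := convexFn_jensen hc h1 h2 ha hb hab
  have hcomb : a • (x + d1) + b • (x + d2) = x + (a • d1 + b • d2) := by
    rw [smul_add, smul_add,
      show a•x+a•d1+(b•x+b•d2) = (a+b)•x + (a•d1+b•d2) by rw [add_smul]; abel,
      hab, one_smul]
  rw [hcomb] at key
  calc g (x + (a • d1 + b • d2)) ≤ ((a*r + b*r : ℝ) : EReal) := key
    _ = (r : EReal) := by rw [← add_mul, hab, one_mul]
    _ = g x := hxr.symm

theorem hzn_nsmul {m : ℕ} {g : (Fin m → ℝ) → EReal} {d : Fin m → ℝ}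
    (hd : d ∈ hznCone g) (k : ℕ) : (k : ℝ) • d ∈ hznCone g := by
  induction k with
  | zero => simpa using (hzn_zero : (0 : Fin m → ℝ) ∈ hznCone g)
  | succ k ih =>
    intro x hx
    have h1 : g (x + (k:ℝ) • d) ≤ g x := ih x hx
    have hne : g (x + (k:ℝ) • d) ≠ ⊤ := fun h => hx (top_le_iff.mp (h ▸ h1))
    have h2 := hd (x + (k:ℝ) • d) hne
    calc g (x + ((k+1:ℕ):ℝ) • d) = g ((x + (k:ℝ) • d) + d) := by
          congr 1; push_cast; rw [add_smul, one_smul]; abel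
      _ ≤ g (x + (k:ℝ) • d) := h2
      _ ≤ g x := h1

theorem hzn_closed {m : ℕ} {g : (Fin m → ℝ) → EReal} (hp : ProperFn g) (hcl : ClosedFn g) :
    IsClosed (hznCone g) := by
  have : hznCone g = ⋂ (x : Fin m → ℝ), ⋂ (_ : g x ≠ ⊤),
      ((fun d => (x + d, (g x).toReal)) ⁻¹' epi g) := by
    ext d
    simp only [hznCone, Set.mem_setOf_eq, Set.mem_iInter, Set.mem_preimage, epi]
    constructor
    · intro h x hx
      exact le_of_le_of_eq (h x hx) (EReal.coe_toReal hx (hp.2 x)).symm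
    · intro h x hx
      exact le_of_le_of_eq (h x hx) (EReal.coe_toReal hx (hp.2 x))
  rw [this]
  exact isClosed_iInter fun x => isClosed_iInter fun hx =>
    hcl.preimage ((continuous_const.add continuous_id).prodMk continuous_const)

theorem mem_of_polar {m : ℕ} {K : Set (Fin m → ℝ)} (hK : Convex ℝ K) (hcl : IsClosed K)
    (h0 : (0 : Fin m → ℝ) ∈ K) (hns : ∀ a ∈ K, ∀ k : ℕ, (k : ℝ) • a ∈ K) {d : Fin m → ℝ}
    (hd : ∀ y : Fin m → ℝ, (∀ a ∈ K, ∑ i, a i * y i ≤ 0) → ∑ i, d i * y i ≤ 0) : d ∈ K := by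
  by_contra hdK
  obtain ⟨f, u, hfa, hud⟩ := geometric_hahn_banach_closed_point hK hcl hdK
  have h0u : (0:ℝ) < u := by simpa using hfa 0 h0
  have hle : ∀ a ∈ K, f a ≤ 0 := by
    intro a haK
    by_contra hpos
    push_neg at hpos
    obtain ⟨k, hk⟩ := exists_nat_gt (u / f a)
    have h1 : u < (k:ℝ) * f a := (div_lt_iff₀ hpos).mp hk
    have h2 : f ((k:ℝ) • a) < u := hfa _ (hns a haK k)
    rw [map_smul, smul_eq_mul] at h2
    linarith
  set y : Fin m → ℝ := fun i => f (fun j => if i = j then 1 else 0) with hy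
  have hrep : ∀ x : Fin m → ℝ, f x = ∑ i, x i * y i := by
    intro x
    have := (f : (Fin m → ℝ) →ₗ[ℝ] ℝ).pi_apply_eq_sum_univ x
    simpa [smul_eq_mul] using this
  have key := hd y (fun a haK => by rw [← hrep a]; exact hle a haK)
  rw [← hrep d] at key
  linarith

theorem dot_deficit {m : ℕ} (y w w1 w2 : Fin m → ℝ) (a b : ℝ) :
    ∑ i, (w - (a • w1 + b • w2)) i * y i
      = (∑ i, y i * w i) - (a * ∑ i, y i * w1 i + b * ∑ i, y i * w2 i) := by
  rw [Finset.mul_sum, Finset.mul_sum, ← Finset.sum_add_distrib, ← Finset.sum_sub_distrib]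
  refine Finset.sum_congr rfl fun i _ => ?_
  simp only [Pi.sub_apply, Pi.add_apply, Pi.smul_apply, smul_eq_mul]
  ring


/-- for `g ∈ Γ₀(ℝᵐ)` with `dom g ∩ rge F ≠ ∅`, the perturbation
function `f(x,u) = g(F(x)+u)` is jointly convex iff `⟨y,F⟩` is convex for every
`y` in the polar of the horizon cone of `g`. -/
theorem stmt19 {n m : ℕ} (g : (Fin m → ℝ) → EReal)
    (hgproper : ProperFn g) (hgclosed : ClosedFn g) (hgconvex : ConvexFn g)
    (F : (Fin n → ℝ) → WithTop (Fin m → ℝ))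
    (hdom : ∃ w : Fin m → ℝ, g w ≠ ⊤ ∧ ∃ x, F x = (w : WithTop (Fin m → ℝ))) :
    ConvexFn (fun p : (Fin n → ℝ) × (Fin m → ℝ) =>
        WithTop.recTopCoe (⊤ : EReal) (fun w => g (w + p.2)) (F p.1)) ↔
      ∀ y : Fin m → ℝ,
        (∀ d ∈ hznCone g, (∑ i, d i * y i) ≤ 0) → ConvexFn (scal y F) := by
  set f : (Fin n → ℝ) × (Fin m → ℝ) → EReal :=
    fun p => WithTop.recTopCoe (⊤ : EReal) (fun w => g (w + p.2)) (F p.1) with hf_def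
  -- extraction lemma for scal
  have scal_le : ∀ (y : Fin m → ℝ) (x : Fin n → ℝ) (r : ℝ), scal y F x ≤ (r : EReal) →
      ∃ w : Fin m → ℝ, F x = ↑w ∧ ∑ i, y i * w i ≤ r := by
    intro y x r h
    have hne : F x ≠ ⊤ := by
      intro ht
      rw [scal, ht] at h
      exact (EReal.coe_lt_top r).not_ge (by simpa using h)
    obtain ⟨w, hw⟩ := WithTop.ne_top_iff_exists.mp hne
    refine ⟨w, hw.symm, ?_⟩
    rw [scal, ← hw] at h
    exact EReal.coe_le_coe_iff.mp (by simpa [dotE] using h)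
  constructor
  · -- forward
    intro hf y hy
    apply convex_of_pos
    rintro ⟨x1, r1⟩ hp1 ⟨x2, r2⟩ hp2 a b ha hb hab
    obtain ⟨w1, hw1, hr1⟩ := scal_le y x1 r1 hp1
    obtain ⟨w2, hw2, hr2⟩ := scal_le y x2 r2 hp2
    -- the key deficit claim
    have key : ∀ v : Fin m → ℝ, g v ≠ ⊤ →
        f (a • x1 + b • x2, a • (v - w1) + b • (v - w2)) ≤ ((g v).toReal : EReal) := by
      intro v hv
      have hvreal : g v = ((g v).toReal : EReal) := (EReal.coe_toReal hv (hgproper.2 v)).symm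
      have h1 : f (x1, v - w1) ≤ ((g v).toReal : EReal) := by
        simp only [hf_def, hw1, WithTop.recTopCoe_coe]
        rw [show w1 + (v - w1) = v by abel]
        exact le_of_eq hvreal
      have h2 : f (x2, v - w2) ≤ ((g v).toReal : EReal) := by
        simp only [hf_def, hw2, WithTop.recTopCoe_coe]
        rw [show w2 + (v - w2) = v by abel]
        exact le_of_eq hvreal
      have := convexFn_jensen hf h1 h2 ha.le hb.le hab
      rw [← add_mul, hab, one_mul] at this
      simpa [Prod.smul_def, Prod.mk_add_mk] using this
    obtain ⟨v0, hv0, -⟩ := hdom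
    have hFz : F (a • x1 + b • x2) ≠ ⊤ := by
      intro ht
      have := key v0 hv0
      rw [hf_def] at this
      simp only [ht, WithTop.recTopCoe_top] at this
      exact (EReal.coe_lt_top _).not_ge this
    obtain ⟨w, hw⟩ := WithTop.ne_top_iff_exists.mp hFz
    have hdd : w - (a • w1 + b • w2) ∈ hznCone g := by
      intro v hv
      have := key v hv
      rw [hf_def] at this
      simp only [← hw, WithTop.recTopCoe_coe] at this
      rw [show w + (a • (v - w1) + b • (v - w2)) = v + (w - (a • w1 + b • w2)) by
        funext i
        simp only [Pi.add_apply, Pi.sub_apply, Pi.smul_apply, smul_eq_mul]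
        linear_combination v i * hab] at this
      exact this.trans_eq (EReal.coe_toReal hv (hgproper.2 v))
    have hyd := hy _ hdd
    rw [dot_deficit] at hyd
    -- conclude membership
    show scal y F (a • (x1, r1) + b • (x2, r2)).1 ≤ ((a • (x1, r1) + b • (x2, r2)).2 : EReal)
    have h1 : (a • (x1, r1) + b • (x2, r2)).1 = a • x1 + b • x2 := rfl
    have h2 : (a • (x1, r1) + b • (x2, r2)).2 = a * r1 + b * r2 := rfl
    rw [h1, h2, scal, ← hw]
    show ((∑ i, y i * w i : ℝ) : EReal) ≤ ((a * r1 + b * r2 : ℝ) : EReal)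
    rw [EReal.coe_le_coe_iff]
    have m1 := mul_le_mul_of_nonneg_left hr1 ha.le
    have m2 := mul_le_mul_of_nonneg_left hr2 hb.le
    linarith
  · -- backward
    intro hscal
    apply convex_of_pos
    rintro ⟨⟨x1, u1⟩, r1⟩ hp1 ⟨⟨x2, u2⟩, r2⟩ hp2 a b ha hb hab
    have f_le : ∀ (x : Fin n → ℝ) (u : Fin m → ℝ) (r : ℝ), f (x, u) ≤ (r : EReal) →
        ∃ w : Fin m → ℝ, F x = ↑w ∧ g (w + u) ≤ (r : EReal) := by
      intro x u r h
      simp only [hf_def] at h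
      have hne : F x ≠ ⊤ := by
        intro ht
        rw [ht] at h
        exact (EReal.coe_lt_top r).not_ge (by simpa using h)
      obtain ⟨w, hw⟩ := WithTop.ne_top_iff_exists.mp hne
      refine ⟨w, hw.symm, ?_⟩
      rw [← hw] at h
      simpa using h
    obtain ⟨w1, hw1', hg1⟩ := f_le x1 u1 r1 hp1
    obtain ⟨w2, hw2', hg2⟩ := f_le x2 u2 r2 hp2
    have hw1 : (↑w1 : WithTop (Fin m → ℝ)) = F x1 := hw1'.symm
    have hw2 : (↑w2 : WithTop (Fin m → ℝ)) = F x2 := hw2'.symm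
    -- F z is finite, via the zero scalarization
    have hzero : ConvexFn (scal (0 : Fin m → ℝ) F) := hscal 0 (by simp)
    have hs1 : scal (0 : Fin m → ℝ) F x1 ≤ ((0:ℝ) : EReal) := by
      rw [scal, ← hw1]; simp [dotE]
    have hs2 : scal (0 : Fin m → ℝ) F x2 ≤ ((0:ℝ) : EReal) := by
      rw [scal, ← hw2]; simp [dotE]
    have hFz : F (a • x1 + b • x2) ≠ ⊤ := by
      intro ht
      have := convexFn_jensen hzero hs1 hs2 ha.le hb.le hab
      rw [scal, ht] at this
      simp only [WithTop.recTopCoe_top] at this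
      exact (EReal.coe_lt_top _).not_ge this
    obtain ⟨w, hw⟩ := WithTop.ne_top_iff_exists.mp hFz
    -- the deficit lies in the horizon cone, by the polar hypothesis
    have hdd : w - (a • w1 + b • w2) ∈ hznCone g := by
      apply mem_of_polar (hzn_convex hgproper hgconvex) (hzn_closed hgproper hgclosed)
        hzn_zero (fun e he k => hzn_nsmul he k)
      intro y hy'
      have hc := hscal y hy'
      have hj1 : scal y F x1 ≤ ((∑ i, y i * w1 i : ℝ) : EReal) := by
        rw [scal, ← hw1]; exact le_refl _
      have hj2 : scal y F x2 ≤ ((∑ i, y i * w2 i : ℝ) : EReal) := by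
        rw [scal, ← hw2]; exact le_refl _
      have := convexFn_jensen hc hj1 hj2 ha.le hb.le hab
      rw [scal, ← hw] at this
      have hreal : (∑ i, y i * w i) ≤ a * (∑ i, y i * w1 i) + b * (∑ i, y i * w2 i) :=
        EReal.coe_le_coe_iff.mp (by simpa [dotE] using this)
      rw [dot_deficit]
      linarith
    -- Jensen for g
    have hcomb := convexFn_jensen hgconvex hg1 hg2 ha.le hb.le hab
    have hcne : g (a • (w1 + u1) + b • (w2 + u2)) ≠ ⊤ := by
      intro ht
      rw [ht] at hcomb
      exact (EReal.coe_lt_top _).not_ge hcomb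
    have hfin := hdd _ hcne
    rw [show (a • (w1 + u1) + b • (w2 + u2)) + (w - (a • w1 + b • w2))
        = w + (a • u1 + b • u2) by
      funext i
      simp only [Pi.add_apply, Pi.sub_apply, Pi.smul_apply, smul_eq_mul]
      ring] at hfin
    -- conclude
    show f ((a • ((x1,u1),r1) + b • ((x2,u2),r2)).1)
        ≤ (((a • ((x1,u1),r1) + b • ((x2,u2),r2)).2 : ℝ) : EReal)
    have h1 : (a • ((x1,u1),r1) + b • ((x2,u2),r2)).1 = (a • x1 + b • x2, a • u1 + b • u2) := rfl
    have h2 : (a • ((x1,u1),r1) + b • ((x2,u2),r2)).2 = a * r1 + b * r2 := rfl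
    rw [h1, h2, hf_def]
    simp only [← hw, WithTop.recTopCoe_coe]
    exact hfin.trans hcomb
end
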